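/- arXiv:1101.0758 — 2 statements merged into one kernel-verified Lean document; each statement's English description precedes it below -/
import Mathlib

section
/- For every r-partition λ of size n, β_{λλ} = 1; that is, there is exactly one singular semistandard tableau of shape λ and weight λ. -/
open scoped BigOperators

namespace CQSA

/-- A box of a multidiagram: component `k`, row `i`, column `j` (0-indexed column). -/
abbrev Box (r : ℕ) (m : Fin r → ℕ) : Type := Σ k : Fin r, Fin (m k) × ℕ

/-- An entry of a tableau: component `c`, letter `a` (0-indexed). -/
abbrev Entry (r : ℕ) (m : Fin r → ℕ) : Type := Σ c : Fin r, Fin (m c)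

/-- Multicompositions with `m k` parts in component `k`. -/
abbrev MComp (r : ℕ) (m : Fin r → ℕ) : Type := (k : Fin r) → Fin (m k) → ℕ

variable {r : ℕ} {m : Fin r → ℕ}

/-- The size `|λ|` of a multicomposition. -/
def size (lam : MComp r m) : ℕ := ∑ k, ∑ i, lam k i

/-- A multicomposition is a multipartition if each component is weakly decreasing. -/
def IsMPartition (lam : MComp r m) : Prop := ∀ k, Antitone (lam k)

/-- `ζ(λ) = (|λ^(1)|, …, |λ^(r)|)`. -/
def zeta (lam : MComp r m) : Fin r → ℕ := fun k => ∑ i, lam k i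

/-- Dominance order: `mu ⊴ lam`. -/
def DomLE (mu lam : MComp r m) : Prop :=
  ∀ (k : Fin r) (i : Fin (m k)),
    ((∑ l ∈ Finset.univ.filter (fun l => l < k), ∑ j, mu l j) +
        ∑ j ∈ Finset.univ.filter (fun j => j ≤ i), mu k j) ≤
      ((∑ l ∈ Finset.univ.filter (fun l => l < k), ∑ j, lam l j) +
        ∑ j ∈ Finset.univ.filter (fun j => j ≤ i), lam k j)

/-- Membership of a box in the diagram `[λ]`. -/
def InDiag (lam : MComp r m) (x : Box r m) : Prop := x.2.2 < lam x.1 x.2.1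

/-- The skew diagram `[λ] \ [ν]` as a predicate on boxes. -/
def SkewD (lamBig lamSmall : MComp r m) (x : Box r m) : Prop :=
  InDiag lamBig x ∧ ¬ InDiag lamSmall x

/-- Order on entries: `(a,c) ≤ (a',c')` iff `c < c'`, or `c = c'` and `a ≤ a'`. -/
def entryLE (e f : Entry r m) : Prop :=
  (e.1 : ℕ) < (f.1 : ℕ) ∨ ((e.1 : ℕ) = (f.1 : ℕ) ∧ (e.2 : ℕ) ≤ (f.2 : ℕ))

/-- Strict order on entries. -/
def entryLT (e f : Entry r m) : Prop :=
  (e.1 : ℕ) < (f.1 : ℕ) ∨ ((e.1 : ℕ) = (f.1 : ℕ) ∧ (e.2 : ℕ) < (f.2 : ℕ))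

/-- Reading order on boxes: `x ⪰ y`, i.e. `x ≻ y` or `x = y`, where
`(i,j,k) ≻ (i',j',k')` iff `k > k'`, or `k = k'` and `j > j'`, or
`k = k'`, `j = j'` and `i < i'`. -/
def BoxGE (x y : Box r m) : Prop :=
  (y.1 : ℕ) < (x.1 : ℕ) ∨
    ((x.1 : ℕ) = (y.1 : ℕ) ∧
      (y.2.2 < x.2.2 ∨ (x.2.2 = y.2.2 ∧ (x.2.1 : ℕ) ≤ (y.2.1 : ℕ))))

/-- Semistandardness of a filling `T` of the set of boxes `D` with weight `mu`. -/
structure IsSST (D : Box r m → Prop) (mu : MComp r m)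
    (T : {x : Box r m // D x} → Entry r m) : Prop where
  comp_le : ∀ x : {x : Box r m // D x}, (x.1.1 : ℕ) ≤ ((T x).1 : ℕ)
  row_weak : ∀ x y : {x : Box r m // D x},
    x.1.1 = y.1.1 → (x.1.2.1 : ℕ) = (y.1.2.1 : ℕ) → x.1.2.2 + 1 = y.1.2.2 →
      entryLE (T x) (T y)
  col_strict : ∀ x y : {x : Box r m // D x},
    x.1.1 = y.1.1 → (x.1.2.1 : ℕ) + 1 = (y.1.2.1 : ℕ) → x.1.2.2 = y.1.2.2 →
      entryLT (T x) (T y)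
  weight : ∀ e : Entry r m, mu e.1 e.2 = Nat.card {x : {x : Box r m // D x} // T x = e}

/-- Singularity of a tableau: every prefix of the component-`c` reading word has
weakly decreasing content, for every `c`. -/
def IsSingular (D : Box r m → Prop) (T : {x : Box r m // D x} → Entry r m) : Prop :=
  ∀ (b : {x : Box r m // D x}) (a : ℕ),
    Nat.card {y : {x : Box r m // D x} //
        (T y).1 = (T b).1 ∧ BoxGE y.1 b.1 ∧ ((T y).2 : ℕ) = a + 1} ≤
      Nat.card {y : {x : Box r m // D x} //
        (T y).1 = (T b).1 ∧ BoxGE y.1 b.1 ∧ ((T y).2 : ℕ) = a}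

/-- The number of semistandard tableaux on the boxes `D` with weight `mu`. -/
noncomputable def nSST (D : Box r m → Prop) (mu : MComp r m) : ℕ :=
  Nat.card {T : {x : Box r m // D x} → Entry r m // IsSST D mu T}

/-- The number of singular semistandard tableaux on the boxes `D` with weight `mu`. -/
noncomputable def nSingSST (D : Box r m → Prop) (mu : MComp r m) : ℕ :=
  Nat.card {T : {x : Box r m // D x} → Entry r m // IsSST D mu T ∧ IsSingular D T}

/-- `#CT₀(λ,μ)`: the number of semistandard tableaux of shape `λ` and weight `μ`. -/
noncomputable def nCT (lam mu : MComp r m) : ℕ := nSST (InDiag lam) mu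

/-- `β_{λμ}`: the number of singular semistandard tableaux of shape `λ` and weight `μ`. -/
noncomputable def beta (lam mu : MComp r m) : ℕ := nSingSST (InDiag lam) mu


/-- The Kostka number `K_{ν μ}`: the number of ordinary semistandard Young
tableaux of shape `ν` (rows indexed by `ℕ`) and weight `μ` (a finite sequence of
nonnegative integers, indexed by the linearly ordered alphabet `ι`). -/
noncomputable def kostka (nu : ℕ → ℕ) {ι : Type} [LinearOrder ι] (mu : ι → ℕ) : ℕ :=
  Nat.card {T : {x : ℕ × ℕ // x.2 < nu x.1} → ι //
    (∀ x y : {x : ℕ × ℕ // x.2 < nu x.1}, x.1.1 = y.1.1 → x.1.2 + 1 = y.1.2 → T x ≤ T y) ∧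
    (∀ x y : {x : ℕ × ℕ // x.2 < nu x.1}, x.1.1 + 1 = y.1.1 → x.1.2 = y.1.2 → T x < T y) ∧
    (∀ a : ι, mu a = Nat.card {x : {x : ℕ × ℕ // x.2 < nu x.1} // T x = a})}

/-- Extension of a finite tuple by zeros. -/
def extF {L : ℕ} (f : Fin L → ℕ) : ℕ → ℕ := fun i => if h : i < L then f ⟨i, h⟩ else 0

/-- The Schur polynomial of the partition `ν` (of size `d`) in `N` variables:
`s_ν(x_1,…,x_N) = ∑_μ K_{νμ} x^μ`. -/
noncomputable def schurP (N d : ℕ) (nu : ℕ → ℕ) : MvPolynomial (Fin N) ℤ :=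
  ∑ f ∈ (Fintype.piFinset fun _ : Fin N => Finset.range (d + 1)) |>.filter
      (fun f => ∑ i, f i = d),
    (kostka nu f : ℤ) • MvPolynomial.monomial (Finsupp.equivFunOnFinite.symm f) 1

/-- `lr` is the family of Littlewood–Richardson coefficients: for all partitions
`α`, `β`, the product of the Schur polynomials `s_α s_β` (in any number `N` of
variables containing the supports) equals `∑_γ lr α β γ • s_γ`, the sum running
over all partitions `γ` of size `|α| + |β|` with at most `N` parts. -/
noncomputable def IsLR (lr : (ℕ → ℕ) → (ℕ → ℕ) → (ℕ → ℕ) → ℕ) : Prop :=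
  ∀ (N : ℕ) (al be : ℕ → ℕ), Antitone al → Antitone be →
    (∀ i, N ≤ i → al i = 0) → (∀ i, N ≤ i → be i = 0) →
    schurP N (∑ i ∈ Finset.range N, al i) al *
        schurP N (∑ i ∈ Finset.range N, be i) be =
      ∑ g ∈ (Fintype.piFinset fun _ : Fin N =>
            Finset.range ((∑ i ∈ Finset.range N, al i) + (∑ i ∈ Finset.range N, be i) + 1)) |>.filter
          (fun g => (∀ i j : Fin N, i ≤ j → g j ≤ g i) ∧
            ∑ i, g i = (∑ i ∈ Finset.range N, al i) + (∑ i ∈ Finset.range N, be i)),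
        (lr al be (extF g) : ℤ) •
          schurP N ((∑ i ∈ Finset.range N, al i) + (∑ i ∈ Finset.range N, be i)) (extF g)

/-- The polynomial `tS_λ(x) = ∑_μ #CT₀(λ,μ) x^μ`, summed over all
`r`-compositions `μ` of size `d`, in the variables `x^{(k)}_i`. -/
noncomputable def tS (d : ℕ) (lam : MComp r m) : MvPolynomial (Entry r m) ℤ :=
  ∑ f ∈ (Fintype.piFinset fun _ : Entry r m => Finset.range (d + 1)) |>.filter
      (fun f => ∑ e, f e = d),
    (nCT lam (fun k i => f ⟨k, i⟩) : ℤ) •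
      MvPolynomial.monomial (Finsupp.equivFunOnFinite.symm f) 1

/-- `S_μ(x) = ∏_k s_{μ^{(k)}}(x^{(k)})`, the product of Schur polynomials. -/
noncomputable def SchurProd (mu : MComp r m) : MvPolynomial (Entry r m) ℤ :=
  ∏ k : Fin r, MvPolynomial.rename (fun i : Fin (m k) => (⟨k, i⟩ : Entry r m))
    (schurP (m k) (∑ i, mu k i) (extF (mu k)))

/-- Membership in `Θ(λ,μ)`: a chain `λ = λ_{⟨r⟩} ⊇ … ⊇ λ_{⟨0⟩} = ∅` of
`r`-partitions with `(λ_{⟨k⟩})^{(k+1)} = ∅` for `1 ≤ k ≤ r-1` and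
`|λ_{⟨k⟩}| - |λ_{⟨k-1⟩}| = |μ^{(k)}|` for `1 ≤ k ≤ r`. -/
def IsTheta (lam mu : MComp r m) (L : Fin (r + 1) → MComp r m) : Prop :=
  (∀ κ, IsMPartition (L κ)) ∧
  L (Fin.last r) = lam ∧
  (∀ (c : Fin r) (i : Fin (m c)), L 0 c i = 0) ∧
  (∀ (k : Fin r) (c : Fin r) (i : Fin (m c)), L k.castSucc c i ≤ L k.succ c i) ∧
  (∀ (k : ℕ) (h : k < r), 1 ≤ k →
    ∀ i : Fin (m ⟨k, h⟩), L ⟨k, Nat.lt_succ_of_lt h⟩ ⟨k, h⟩ i = 0) ∧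
  (∀ k : Fin r, size (L k.succ) = size (L k.castSucc) + ∑ i, mu k i)

/-- The multicomposition `(∅, …, ∅, w, ∅, …, ∅)` concentrated in component `k`. -/
def unitWeight (k : Fin r) (w : Fin (m k) → ℕ) : MComp r m :=
  fun c i => if h : c = k then w (Fin.cast (congrArg m h) i) else 0

/-- The index in `Fin r` of the `j`-th member of the `k`-th block, for blocks of
sizes `rs 0, …, rs (g-1)` with `∑ rs = r`. -/
def blockIdx {g : ℕ} (rs : Fin g → ℕ) (hsum : ∑ l, rs l = r) (k : Fin g) (j : Fin (rs k)) :
    Fin r :=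
  ⟨(∑ l ∈ Finset.univ.filter (fun l => l < k), rs l) + j, by
    classical
    have hj := j.isLt
    have h1 : (∑ l ∈ Finset.univ.filter (fun l => l < k), rs l) + rs k ≤ ∑ l, rs l := by
      have hk : k ∉ Finset.univ.filter (fun l => l < k) := by simp
      have h2 : (∑ l ∈ insert k (Finset.univ.filter (fun l => l < k)), rs l)
          = (∑ l ∈ Finset.univ.filter (fun l => l < k), rs l) + rs k := by
        rw [Finset.sum_insert hk]; ring
      rw [← h2]
      exact Finset.sum_le_sum_of_subset (Finset.subset_univ _)
    omega⟩

/-- The permutation of the variables `x^{(k)}_i` within the `k`-th set induced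
by `σ ∈ S_{m_k}`. -/
def blockPermFun (k : Fin r) (sg : Equiv.Perm (Fin (m k))) : Entry r m → Entry r m :=
  fun e => if h : e.1 = k then ⟨k, sg (Fin.cast (congrArg m h) e.2)⟩ else e


/-! ### Auxiliary material for `beta_diagonal_eq_one` -/

/-- The entry naturally associated to a box: its component and row. -/
def boxEntry (x : Box r m) : Entry r m := ⟨x.1, x.2.1⟩

/-- The diagram of `lam` as a sigma type. -/
def diagEquiv (lam : MComp r m) :
    {x : Box r m // InDiag lam x} ≃ Σ e : Entry r m, Fin (lam e.1 e.2) where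
  toFun x := ⟨⟨x.1.1, x.1.2.1⟩, ⟨x.1.2.2, x.2⟩⟩
  invFun p := ⟨⟨p.1.1, p.1.2, (p.2 : ℕ)⟩, p.2.isLt⟩
  left_inv x := rfl
  right_inv p := rfl

instance (lam : MComp r m) : Finite {x : Box r m // InDiag lam x} :=
  Finite.of_equiv _ (diagEquiv lam).symm

lemma entry_ext {e f : Entry r m} (h1 : (e.1 : ℕ) = (f.1 : ℕ)) (h2 : (e.2 : ℕ) = (f.2 : ℕ)) :
    e = f := by
  obtain ⟨c, a⟩ := e; obtain ⟨c', a'⟩ := f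
  simp only at h1 h2
  have hc : c = c' := Fin.ext h1
  subst hc
  exact congrArg (Sigma.mk c) (Fin.ext h2)

lemma box_ext {x y : Box r m} (h1 : x.1 = y.1) (h2 : (x.2.1 : ℕ) = (y.2.1 : ℕ))
    (h3 : x.2.2 = y.2.2) : x = y := by
  obtain ⟨k, i, j⟩ := x; obtain ⟨k', i', j'⟩ := y
  simp only at h1 h2 h3
  subst h1; subst h3
  exact congrArg (Sigma.mk k) (congrArg (fun z => (z, j)) (Fin.ext h2))

lemma card_boxEntry_fiber (lam : MComp r m) (e : Entry r m) :
    Nat.card {x : {x : Box r m // InDiag lam x} // boxEntry x.1 = e} = lam e.1 e.2 := by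
  have eqv : {x : {x : Box r m // InDiag lam x} // boxEntry x.1 = e} ≃ Fin (lam e.1 e.2) :=
    { toFun := fun x =>
        Fin.cast (congrArg (fun e : Entry r m => lam e.1 e.2) x.2) ⟨x.1.1.2.2, x.1.2⟩
      invFun := fun j => ⟨⟨⟨e.1, e.2, (j : ℕ)⟩, j.isLt⟩, rfl⟩
      left_inv := by rintro ⟨⟨⟨k, i, j⟩, hd⟩, h⟩; subst h; rfl
      right_inv := by rintro ⟨j, hj⟩; rfl }
  rw [Nat.card_congr eqv, Nat.card_eq_fintype_card, Fintype.card_fin]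

lemma card_comp (lam : MComp r m) (f : {x : Box r m // InDiag lam x} → Entry r m)
    (P : Entry r m → Prop) [DecidablePred P] :
    Nat.card {x : {x : Box r m // InDiag lam x} // P (f x)} =
      ∑ e ∈ Finset.univ.filter P,
        Nat.card {x : {x : Box r m // InDiag lam x} // f x = e} := by
  classical
  letI : Fintype {x : Box r m // InDiag lam x} := Fintype.ofFinite _
  rw [Nat.card_eq_fintype_card, Fintype.card_subtype]
  rw [Finset.card_eq_sum_card_fiberwise (f := f) (t := Finset.univ.filter P)
    (by intro x hx; simp only [Finset.mem_coe, Finset.mem_filter, Finset.mem_univ, true_and] at hx ⊢; exact hx)]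
  refine Finset.sum_congr rfl (fun e he => ?_)
  simp only [Finset.mem_filter, Finset.mem_univ, true_and] at he
  rw [Nat.card_eq_fintype_card, Fintype.card_subtype]
  congr 1
  ext x
  simp only [Finset.mem_filter, Finset.mem_univ, true_and]
  exact ⟨fun h => h.2, fun h => ⟨h ▸ he, h⟩⟩

lemma card_pred_eq (lam : MComp r m) {T : {x : Box r m // InDiag lam x} → Entry r m}
    (hT : IsSST (InDiag lam) lam T) (P : Entry r m → Prop) :
    Nat.card {x : {x : Box r m // InDiag lam x} // P (T x)} =
      Nat.card {x : {x : Box r m // InDiag lam x} // P (boxEntry x.1)} := by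
  classical
  rw [card_comp lam T P, card_comp lam (fun x => boxEntry x.1) P]
  refine Finset.sum_congr rfl (fun e _ => ?_)
  rw [← hT.weight e, card_boxEntry_fiber lam e]

lemma pred_eq_of_subset {α : Type*} [Finite α] {p q : α → Prop}
    (hsub : ∀ x, p x → q x) (hcard : Nat.card {x // q x} ≤ Nat.card {x // p x}) :
    ∀ x, q x → p x := by
  have h1 : {x | p x} ⊆ {x | q x} := hsub
  have h2 : {x | q x}.ncard ≤ {x | p x}.ncard := by
    rw [← Nat.card_coe_set_eq, ← Nat.card_coe_set_eq]; exact hcard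
  have h3 := Set.eq_of_subset_of_ncard_le h1 h2 (Set.toFinite _)
  intro x hx
  exact (Set.ext_iff.mp h3 x).mpr hx

/-- The canonical tableau: the box `(i,j,k)` is filled with the entry `(i,k)`. -/
def T0 (lam : MComp r m) : {x : Box r m // InDiag lam x} → Entry r m := fun x => boxEntry x.1

lemma isSST_T0 (lam : MComp r m) : IsSST (InDiag lam) lam (T0 lam) where
  comp_le x := le_refl _
  row_weak x y h1 h2 _ := Or.inr ⟨congrArg Fin.val h1, le_of_eq h2⟩
  col_strict x y h1 h2 _ :=
    Or.inr ⟨congrArg Fin.val h1, show (x.1.2.1 : ℕ) < (y.1.2.1 : ℕ) by omega⟩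
  weight e := (card_boxEntry_fiber lam e).symm

lemma BoxGE_lower {x b : Box r m} (h : BoxGE x b) {a : ℕ} (ha : a ≤ (x.2.1 : ℕ))
    (ham : a < m x.1) : BoxGE (⟨x.1, ⟨⟨a, ham⟩, x.2.2⟩⟩ : Box r m) b := by
  obtain ⟨k, i, j⟩ := x
  obtain ⟨k', i', j'⟩ := b
  dsimp only at ha ham
  dsimp only [BoxGE] at h ⊢
  omega

lemma isSingular_T0 (lam : MComp r m) (hlam : IsMPartition lam) :
    IsSingular (InDiag lam) (T0 lam) := by
  intro b a
  refine Nat.card_le_card_of_injective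
    (fun y =>
      ⟨⟨⟨y.1.1.1, ⟨⟨a, by
            have h3 : (y.1.1.2.1 : ℕ) = a + 1 := y.2.2.2
            have h4 := y.1.1.2.1.isLt
            omega⟩, y.1.1.2.2⟩⟩, by
          have h3 : (y.1.1.2.1 : ℕ) = a + 1 := y.2.2.2
          refine lt_of_lt_of_le y.1.2 (hlam y.1.1.1 ?_)
          rw [Fin.le_def]; simp; omega⟩,
        y.2.1, BoxGE_lower y.2.2.1
          (by have h3 : (y.1.1.2.1 : ℕ) = a + 1 := y.2.2.2; omega) _, rfl⟩)
    ?_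
  intro y y' e
  have hk : y.1.1.1 = y'.1.1.1 := congrArg (fun z => z.1.1.1) e
  have hj : y.1.1.2.2 = y'.1.1.2.2 := congrArg (fun z => z.1.1.2.2) e
  have hi : (y.1.1.2.1 : ℕ) = (y'.1.1.2.1 : ℕ) := by
    have h1 : (y.1.1.2.1 : ℕ) = a + 1 := y.2.2.2
    have h2 : (y'.1.1.2.1 : ℕ) = a + 1 := y'.2.2.2
    omega
  exact Subtype.ext (Subtype.ext (box_ext hk hi hj))

lemma sst_unique (lam : MComp r m) (hlam : IsMPartition lam)
    {T : {x : Box r m // InDiag lam x} → Entry r m}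
    (hT : IsSST (InDiag lam) lam T) : T = T0 lam := by
  classical
  -- Step A: entry components agree with box components.
  have hA : ∀ x, ((T x).1 : ℕ) = (x.1.1 : ℕ) := by
    intro x
    refine le_antisymm ?_ (hT.comp_le x)
    have key := pred_eq_of_subset
      (p := fun y : {x : Box r m // InDiag lam x} => ((T y).1 : ℕ) ≤ (x.1.1 : ℕ))
      (q := fun y : {x : Box r m // InDiag lam x} => (y.1.1 : ℕ) ≤ (x.1.1 : ℕ))
      (fun y hy => le_trans (hT.comp_le y) hy)
      (le_of_eq (card_pred_eq lam hT (fun e => (e.1 : ℕ) ≤ (x.1.1 : ℕ))).symm)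
    exact key x le_rfl
  -- Step B1: the letter of a box is at least its row index.
  have hrow : ∀ x : {x : Box r m // InDiag lam x}, (x.1.2.1 : ℕ) ≤ ((T x).2 : ℕ) := by
    have main : ∀ i : ℕ, ∀ x : {x : Box r m // InDiag lam x},
        (x.1.2.1 : ℕ) = i → i ≤ ((T x).2 : ℕ) := by
      intro i
      induction i with
      | zero => intro x _; exact Nat.zero_le _
      | succ i ih =>
        intro x hx
        have him : i < m x.1.1 := by have := x.1.2.1.isLt; omega
        have hd' : InDiag lam ⟨x.1.1, ⟨⟨i, him⟩, x.1.2.2⟩⟩ := by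
          refine lt_of_lt_of_le x.2 (hlam x.1.1 ?_)
          rw [Fin.le_def]; simp; omega
        have hcs := hT.col_strict ⟨⟨x.1.1, ⟨⟨i, him⟩, x.1.2.2⟩⟩, hd'⟩ x rfl
          (by simp; omega) rfl
        have hih := ih ⟨⟨x.1.1, ⟨⟨i, him⟩, x.1.2.2⟩⟩, hd'⟩ rfl
        rcases hcs with h | ⟨h1, h2⟩
        · exfalso
          have e1 := hA (⟨⟨x.1.1, ⟨⟨i, him⟩, x.1.2.2⟩⟩, hd'⟩ : {x : Box r m // InDiag lam x})
          have e2 := hA x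
          simp only at e1
          omega
        · omega
    intro x; exact main _ x rfl
  -- Step B2: the letter of a box is at most its row index.
  have hB : ∀ x, ((T x).2 : ℕ) ≤ (x.1.2.1 : ℕ) := by
    intro x
    have key := pred_eq_of_subset
      (p := fun y : {x : Box r m // InDiag lam x} =>
        y.1.1 = (T x).1 ∧ ((T x).2 : ℕ) ≤ (y.1.2.1 : ℕ))
      (q := fun y : {x : Box r m // InDiag lam x} =>
        (T y).1 = (T x).1 ∧ ((T x).2 : ℕ) ≤ ((T y).2 : ℕ))
      (fun y hy => ⟨(Fin.ext (hA y)).trans hy.1, le_trans hy.2 (hrow y)⟩)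
      (by exact le_of_eq (card_pred_eq lam hT
        (fun e => e.1 = (T x).1 ∧ ((T x).2 : ℕ) ≤ (e.2 : ℕ))))
    exact (key x ⟨rfl, le_rfl⟩).2
  funext x
  exact entry_ext (hA x) (le_antisymm (hB x) (hrow x))

/-- For every `r`-partition `λ` of size `n`, `β_{λλ} = 1`: there is exactly one
singular semistandard tableau of shape `λ` and weight `λ`. -/
theorem beta_diagonal_eq_one (r n : ℕ) (hr : 1 ≤ r) (m : Fin r → ℕ) (hm : ∀ k, n ≤ m k)
    (lam : MComp r m) (hlam : IsMPartition lam) (hlams : size lam = n) :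
    beta lam lam = 1 := by
  classical
  show Nat.card {T : {x : Box r m // InDiag lam x} → Entry r m //
    IsSST (InDiag lam) lam T ∧ IsSingular (InDiag lam) T} = 1
  rw [Nat.card_eq_one_iff_unique]
  refine ⟨⟨fun a b => ?_⟩, ⟨⟨T0 lam, isSST_T0 lam, isSingular_T0 lam hlam⟩⟩⟩
  exact Subtype.ext ((sst_unique lam hlam a.2.1).trans (sst_unique lam hlam b.2.1).symm)

end CQSA
end

section
/- For r-partitions λ, μ of size n, if β_{λμ} ≠ 0 then λ ≥ μ in the dominance order. -/
open scoped BigOperators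

namespace CQSA

variable {r : ℕ} {m : Fin r → ℕ}

/-- Any single part is at most the size. -/
lemma part_le_size (nu : MComp r m) (k : Fin r) (i : Fin (m k)) : nu k i ≤ size nu := by
  unfold size
  calc nu k i ≤ ∑ i', nu k i' :=
        Finset.single_le_sum (fun _ _ => Nat.zero_le _) (Finset.mem_univ i)
    _ ≤ ∑ k', ∑ i', nu k' i' :=
        Finset.single_le_sum (f := fun k' => ∑ i', nu k' i')
          (fun _ _ => Nat.zero_le _) (Finset.mem_univ k)

/-- Diagrams are finite. -/
lemma diag_finite (lam : MComp r m) : Finite {x : Box r m // InDiag lam x} := by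
  apply Finite.of_injective
    (β := Σ k : Fin r, Fin (m k) × Fin (size lam))
    (fun x => ⟨x.1.1, (x.1.2.1,
      ⟨x.1.2.2, by
        have hx : x.1.2.2 < lam x.1.1 x.1.2.1 := x.2
        exact lt_of_lt_of_le hx (part_le_size lam x.1.1 x.1.2.1)⟩)⟩)
  rintro ⟨⟨k1, a1, j1⟩, hx⟩ ⟨⟨k2, a2, j2⟩, hy⟩ h
  obtain ⟨hk, h2⟩ := Sigma.mk.inj_iff.mp h
  subst hk
  have h2' := eq_of_heq h2
  simp only [Prod.mk.injEq, Fin.mk.injEq] at h2'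
  obtain ⟨rfl, rfl⟩ := h2'
  rfl

/-- In a semistandard tableau, if the entry's component equals the box's
component, then the row index is at most the letter. -/
lemma row_le_letter {lam mu : MComp r m} (hlam : IsMPartition lam)
    {T : {x : Box r m // InDiag lam x} → Entry r m} (hT : IsSST (InDiag lam) mu T) :
    ∀ (N : ℕ) (x : {x : Box r m // InDiag lam x}), (x.1.2.1 : ℕ) = N →
      ((T x).1 : ℕ) = (x.1.1 : ℕ) → N ≤ ((T x).2 : ℕ) := by
  intro N
  induction N using Nat.strong_induction_on with
  | _ N ih =>
    rcases N with _ | N'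
    · intro x _ _; exact Nat.zero_le _
    · rintro ⟨⟨k', a', j⟩, hd⟩ hxN hcomp
      have hxN' : (a' : ℕ) = N' + 1 := hxN
      have hm' : N' < m k' := by have := a'.isLt; omega
      have hd' : j < lam k' a' := hd
      have hdy : InDiag lam ⟨k', (⟨N', hm'⟩, j)⟩ := by
        show j < lam k' ⟨N', hm'⟩
        refine lt_of_lt_of_le hd' (hlam k' ?_)
        rw [Fin.le_def]
        simp only []
        omega
      let x : {x : Box r m // InDiag lam x} := ⟨⟨k', (a', j)⟩, hd⟩
      let y : {x : Box r m // InDiag lam x} := ⟨⟨k', (⟨N', hm'⟩, j)⟩, hdy⟩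
      have hcomp' : ((T x).1 : ℕ) = (k' : ℕ) := hcomp
      have hcs : entryLT (T y) (T x) :=
        hT.col_strict y x rfl (by show N' + 1 = (a' : ℕ); omega) rfl
      have hcy : (k' : ℕ) ≤ ((T y).1 : ℕ) := hT.comp_le y
      show N' + 1 ≤ ((T x).2 : ℕ)
      rcases hcs with h | ⟨h1, h2⟩
      · omega
      · have hih := ih N' (Nat.lt_succ_self N') y rfl (by show ((T y).1 : ℕ) = (k' : ℕ); omega)
        omega

/-- The number of diagram boxes in component `c`, row `a`, is `lam c a`. -/
lemma fiber_card (lam : MComp r m) (c : Fin r) (a : Fin (m c)) :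
    Nat.card {x : {x : Box r m // InDiag lam x} //
      (⟨x.1.1, x.1.2.1⟩ : Entry r m) = ⟨c, a⟩} = lam c a := by
  have hbij : Function.Bijective
      (fun j : Fin (lam c a) =>
        (⟨⟨⟨c, (a, j.1)⟩, j.2⟩, rfl⟩ : {x : {x : Box r m // InDiag lam x} //
          (⟨x.1.1, x.1.2.1⟩ : Entry r m) = ⟨c, a⟩})) := by
    constructor
    · intro j j' h
      exact Fin.ext (congrArg (fun z => z.1.1.2.2) h)
    · rintro ⟨⟨⟨k', a', j⟩, hd⟩, hf⟩
      obtain ⟨hk, ha⟩ := Sigma.mk.inj_iff.mp hf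
      subst hk
      have ha' := eq_of_heq ha
      subst ha'
      exact ⟨⟨j, hd⟩, Subtype.ext rfl⟩
  rw [← Nat.card_eq_of_bijective _ hbij, Nat.card_eq_fintype_card, Fintype.card_fin]

/-- Fiberwise counting. -/
lemma card_filter_sum {α β : Type*} [Finite α] [Fintype β] (g : α → β)
    (R : β → Prop) [DecidablePred R] :
    Nat.card {x : α // R (g x)} = ∑ e ∈ Finset.univ.filter R, Nat.card {x : α // g x = e} := by
  classical
  cases nonempty_fintype α
  rw [Nat.card_eq_fintype_card, Fintype.card_subtype]
  rw [Finset.card_eq_sum_card_fiberwise (f := g) (t := Finset.univ.filter R)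
    (fun x hx => by simpa using hx)]
  refine Finset.sum_congr rfl (fun e he => ?_)
  rw [Nat.card_eq_fintype_card, Fintype.card_subtype]
  congr 1
  ext x
  simp only [Finset.mem_filter, Finset.mem_univ, true_and, and_iff_right_iff_imp]
  rintro rfl
  exact (Finset.mem_filter.mp he).2

/-- Summation over the entries below `(i,k)`. -/
lemma sum_filter_entries (nu : MComp r m) (k : Fin r) (i : Fin (m k)) :
    ∑ e ∈ Finset.univ.filter
        (fun e : Entry r m => (e.1 : ℕ) < (k : ℕ) ∨ ((e.1 : ℕ) = (k : ℕ) ∧ (e.2 : ℕ) ≤ (i : ℕ))),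
      nu e.1 e.2
    = ((∑ l ∈ Finset.univ.filter (fun l => l < k), ∑ j, nu l j) +
        ∑ j ∈ Finset.univ.filter (fun j => j ≤ i), nu k j) := by
  classical
  rw [Finset.sum_filter, ← Finset.univ_sigma_univ, Finset.sum_sigma]
  have hsplit : ∀ c : Fin r,
      (∑ a : Fin (m c), if (c : ℕ) < (k : ℕ) ∨ ((c : ℕ) = (k : ℕ) ∧ (a : ℕ) ≤ (i : ℕ))
        then nu c a else 0)
      = (if c < k then ∑ a, nu c a else 0) +
        (if c = k then ∑ j ∈ Finset.univ.filter (fun j => j ≤ i), nu k j else 0) := by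
    intro c
    rcases lt_trichotomy (c : ℕ) (k : ℕ) with h | h | h
    · have hck : c < k := by rwa [Fin.lt_def]
      have hne : c ≠ k := by rintro rfl; omega
      simp [h, hck, hne]
    · have hck : c = k := Fin.ext h
      subst hck
      rw [if_neg (lt_irrefl c), if_pos rfl, zero_add,
        Finset.sum_filter (fun j => j ≤ i) (nu c)]
      refine Finset.sum_congr rfl (fun a _ => ?_)
      have hiff : ((c : ℕ) < (c : ℕ) ∨ ((c : ℕ) = (c : ℕ) ∧ (a : ℕ) ≤ (i : ℕ)))
          ↔ a ≤ i := by
        rw [Fin.le_def]; omega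
      simp [hiff]
    · have h1 : ¬ ((c : ℕ) < (k : ℕ)) := by omega
      have h2 : ¬ c < k := by rwa [Fin.lt_def]
      have hne : c ≠ k := by rintro rfl; omega
      simp only [h1, false_or, if_neg h2, if_neg hne, add_zero]
      rw [Finset.sum_eq_zero]
      intro a _
      rw [if_neg]
      rintro ⟨hck, -⟩
      omega
  calc ∑ c : Fin r, ∑ a : Fin (m c),
        (if (c : ℕ) < (k : ℕ) ∨ ((c : ℕ) = (k : ℕ) ∧ (a : ℕ) ≤ (i : ℕ)) then nu c a else 0)
      = ∑ c : Fin r, ((if c < k then ∑ a, nu c a else 0) +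
          (if c = k then ∑ j ∈ Finset.univ.filter (fun j => j ≤ i), nu k j else 0)) :=
        Finset.sum_congr rfl (fun c _ => hsplit c)
    _ = (∑ l ∈ Finset.univ.filter (fun l => l < k), ∑ j, nu l j) +
        ∑ j ∈ Finset.univ.filter (fun j => j ≤ i), nu k j := by
        rw [Finset.sum_add_distrib, ← Finset.sum_filter]
        congr 1
        simp


/-- For `r`-partitions `λ, μ` of size `n`, if `β_{λμ} ≠ 0` then `λ ≥ μ` in the
dominance order. -/
theorem dominance_of_beta_ne_zero (r n : ℕ) (hr : 1 ≤ r) (m : Fin r → ℕ) (hm : ∀ k, n ≤ m k)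
    (lam mu : MComp r m) (hlam : IsMPartition lam) (hlams : size lam = n)
    (hmu : IsMPartition mu) (hmus : size mu = n)
    (hb : beta lam mu ≠ 0) :
    DomLE mu lam := by
  classical
  have hfin : Finite {x : Box r m // InDiag lam x} := diag_finite lam
  unfold beta nSingSST at hb
  obtain ⟨⟨T, hT, _⟩⟩ := (Nat.card_ne_zero.mp hb).1
  intro k i
  set P : Entry r m → Prop :=
    fun e => (e.1 : ℕ) < (k : ℕ) ∨ ((e.1 : ℕ) = (k : ℕ) ∧ (e.2 : ℕ) ≤ (i : ℕ)) with hP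
  have key : ∀ x : {x : Box r m // InDiag lam x},
      P (T x) → P ⟨x.1.1, x.1.2.1⟩ := by
    intro x hPx
    have hcl : (x.1.1 : ℕ) ≤ ((T x).1 : ℕ) := hT.comp_le x
    show (x.1.1 : ℕ) < (k : ℕ) ∨ ((x.1.1 : ℕ) = (k : ℕ) ∧ (x.1.2.1 : ℕ) ≤ (i : ℕ))
    rcases hPx with h | ⟨h1, h2⟩
    · exact Or.inl (lt_of_le_of_lt hcl h)
    · rcases lt_or_eq_of_le hcl with h' | h'
      · exact Or.inl (by omega)
      · refine Or.inr ⟨by omega, ?_⟩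
        have := row_le_letter hlam hT (x.1.2.1 : ℕ) x rfl (by omega)
        omega
  calc ((∑ l ∈ Finset.univ.filter (fun l => l < k), ∑ j, mu l j) +
        ∑ j ∈ Finset.univ.filter (fun j => j ≤ i), mu k j)
      = ∑ e ∈ Finset.univ.filter P, mu e.1 e.2 := (sum_filter_entries mu k i).symm
    _ = ∑ e ∈ Finset.univ.filter P,
          Nat.card {x : {x : Box r m // InDiag lam x} // T x = e} :=
        Finset.sum_congr rfl (fun e _ => hT.weight e)
    _ = Nat.card {x : {x : Box r m // InDiag lam x} // P (T x)} :=
        (card_filter_sum T P).symm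
    _ ≤ Nat.card {x : {x : Box r m // InDiag lam x} //
          P ⟨x.1.1, x.1.2.1⟩} := by
        refine Nat.card_le_card_of_injective
          (fun y => ⟨y.1, key y.1 y.2⟩) ?_
        intro y y' h
        have h2 := congrArg
          (fun z : {x : {x : Box r m // InDiag lam x} // P ⟨x.1.1, x.1.2.1⟩} => z.1) h
        exact Subtype.ext h2
    _ = ∑ e ∈ Finset.univ.filter P,
          Nat.card {x : {x : Box r m // InDiag lam x} //
            (⟨x.1.1, x.1.2.1⟩ : Entry r m) = e} :=
        card_filter_sum (fun x : {x : Box r m // InDiag lam x} => (⟨x.1.1, x.1.2.1⟩ : Entry r m)) P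
    _ = ∑ e ∈ Finset.univ.filter P, lam e.1 e.2 :=
        Finset.sum_congr rfl (fun e _ => fiber_card lam e.1 e.2)
    _ = ((∑ l ∈ Finset.univ.filter (fun l => l < k), ∑ j, lam l j) +
        ∑ j ∈ Finset.univ.filter (fun j => j ≤ i), lam k j) := sum_filter_entries lam k i

end CQSA
end
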